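/- In the degenerate case γ = κ₁, for all λ ∈ ℝ: S_ω(⃗φ_ω + λ⃗ψ_ω) = S_ω(⃗φ_ω) + (ν₁/24)λ⁴ exactly, and ⟨S_ω'(⃗φ_ω + λ⃗ψ_ω), ⃗ψ_ω⟩ = (ν₁/6)λ³, where ν₁ = −(6κ₂/κ₁²)‖φ_ω‖⁴_{L⁴}. -/

import Mathlib

open MeasureTheory Real Asymptotics

/-- The soliton profile `φ_ω(x) = √(2ω) sech(√ω x)`, with `sech y = 1 / cosh y`. -/
noncomputable def phiW (ω x : ℝ) : ℝ :=
  Real.sqrt (2 * ω) * (1 / Real.cosh (Real.sqrt ω * x))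

/-- The linearized operator `L_a u = -u'' + ω u - a φ_ω² u`. -/
noncomputable def Lop (ω a : ℝ) (u : ℝ → ℝ) (x : ℝ) : ℝ :=
  -(deriv (deriv u) x) + ω * u x - a * (phiW ω x) ^ 2 * u x

/-- The quadratic form `⟨L_a u, u⟩ = ∫ (|u'|² + ω u² - a φ_ω² u²)`. -/
noncomputable def QLa (ω a : ℝ) (u : ℝ → ℝ) : ℝ :=
  ∫ x : ℝ, ((deriv u x) ^ 2 + ω * (u x) ^ 2 - a * (phiW ω x) ^ 2 * (u x) ^ 2)

/-- Pairs of complex-valued functions on ℝ. -/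
abbrev Pair := (ℝ → ℂ) × (ℝ → ℂ)

/-- The energy functional `E`. -/
noncomputable def En (κ₁ κ₂ γ : ℝ) (u : Pair) : ℝ :=
  ((1 / 2) * ∫ x : ℝ, ‖deriv u.1 x‖ ^ 2) - ((κ₁ / 4) * ∫ x : ℝ, ‖u.1 x‖ ^ 4)
  + ((1 / 2) * ∫ x : ℝ, ‖deriv u.2 x‖ ^ 2) - ((κ₂ / 4) * ∫ x : ℝ, ‖u.2 x‖ ^ 4)
  - (γ / 2) * (∫ x : ℝ, (u.1 x) ^ 2 * (starRingEnd ℂ (u.2 x)) ^ 2).re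

/-- The charge functional `Q`. -/
noncomputable def Qm (u : Pair) : ℝ :=
  (1 / 2) * ((∫ x : ℝ, ‖u.1 x‖ ^ 2) + ∫ x : ℝ, ‖u.2 x‖ ^ 2)

/-- The action `S_ω = E + ω Q`. -/
noncomputable def Sfun (κ₁ κ₂ γ ω : ℝ) (u : Pair) : ℝ :=
  En κ₁ κ₂ γ u + ω * Qm u

/-- The semitrivial profile `⃗φ_ω = (κ₁^{-1/2} φ_ω, 0)`. -/
noncomputable def phivec (κ₁ ω : ℝ) : Pair :=
  (fun x => ((phiW ω x / Real.sqrt κ₁ : ℝ) : ℂ), fun _ => 0)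

/-- The profile `⃗ψ_ω = (0, κ₁^{-1/2} φ_ω)`. -/
noncomputable def psivec (κ₁ ω : ℝ) : Pair :=
  (fun _ => 0, fun x => ((phiW ω x / Real.sqrt κ₁ : ℝ) : ℂ))

/-- Real `L²`-inner product on pairs: `(⃗u,⃗v)_H = Σ_j Re ∫ u_j \bar v_j`. -/
noncomputable def Hinner (u v : Pair) : ℝ :=
  (∫ x : ℝ, (u.1 x) * (starRingEnd ℂ (v.1 x))).re
  + (∫ x : ℝ, (u.2 x) * (starRingEnd ℂ (v.2 x))).re

/-- Multiplication of a pair by `i`. -/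
noncomputable def Ivec (u : Pair) : Pair :=
  (fun x => Complex.I * u.1 x, fun x => Complex.I * u.2 x)

/-- Squared `X = H¹(ℝ,ℂ)²` norm. -/
noncomputable def XnormSq (u : Pair) : ℝ :=
  (∫ x : ℝ, ‖u.1 x‖ ^ 2) + (∫ x : ℝ, ‖deriv u.1 x‖ ^ 2)
  + (∫ x : ℝ, ‖u.2 x‖ ^ 2) + (∫ x : ℝ, ‖deriv u.2 x‖ ^ 2)

/-- Squared `H¹(ℝ,ℝ)` norm. -/
noncomputable def H1normSq (v : ℝ → ℝ) : ℝ :=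
  (∫ x : ℝ, (v x) ^ 2) + (∫ x : ℝ, (deriv v x) ^ 2)

/-- Membership in `H¹(ℝ,ℝ)`. -/
noncomputable def InH1r (v : ℝ → ℝ) : Prop :=
  Differentiable ℝ v ∧ MemLp v 2 (volume : Measure ℝ) ∧
    MemLp (deriv v) 2 (volume : Measure ℝ)

/-- Membership in `H¹(ℝ,ℂ)`. -/
noncomputable def InH1c (v : ℝ → ℂ) : Prop :=
  Differentiable ℝ v ∧ MemLp v 2 (volume : Measure ℝ) ∧
    MemLp (deriv v) 2 (volume : Measure ℝ)

/-- Membership of a pair in `X = H¹(ℝ,ℂ)²` with even symmetry. -/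
noncomputable def InXeven (u : Pair) : Prop :=
  InH1c u.1 ∧ InH1c u.2 ∧ (∀ x, u.1 (-x) = u.1 x) ∧ (∀ x, u.2 (-x) = u.2 x)

/-!
Along the line `t ↦ ⃗φ_ω + t⃗ψ_ω` both components are real multiples `a φ_ω`, `b φ_ω` of the
soliton (`a = κ₁^{-1/2}`, `b = t a`), so `S_ω` is an explicit polynomial in `(a, b)` whose
coefficients are `∫ φ_ω'² + ω ∫ φ_ω²` and `∫ φ_ω⁴`. For `γ = κ₁` the coefficient of `t²` is a
multiple of `∫ φ_ω'² + ω ∫ φ_ω² - ∫ φ_ω⁴`, which vanishes (the Nehari identity, which follows from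
the explicit values `∫ sech² = 2`, `∫ tanh² sech² = 2/3`, `∫ sech⁴ = 4/3`); only the quartic
term `-(κ₂ / (4κ₁²)) t⁴ ∫ φ_ω⁴ = (ν₁/24) t⁴` survives.
-/

open Filter Topology

namespace Real

theorem hasDerivAt_tanh (x : ℝ) : HasDerivAt tanh (1 / cosh x ^ 2) x := by
  have h := (hasDerivAt_sinh x).div (hasDerivAt_cosh x) (cosh_pos x).ne'
  rw [show tanh = fun y => sinh y / cosh y from funext tanh_eq_sinh_div_cosh]
  refine h.congr_deriv ?_
  have := (cosh_pos x).ne'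
  field_simp
  linear_combination cosh_sq_sub_sinh_sq x

theorem tanh_eq_one_sub_two_div (x : ℝ) : tanh x = 1 - 2 / (exp (2 * x) + 1) := by
  have hexp : exp (2 * x) = exp x ^ 2 := by rw [← exp_nat_mul]; norm_num
  rw [tanh_eq_sinh_div_cosh, sinh_eq, cosh_eq, exp_neg, hexp]
  have := exp_pos x
  field_simp
  ring

theorem tendsto_tanh_atTop : Tendsto tanh atTop (𝓝 1) := by
  have hden : Tendsto (fun x => exp (2 * x) + 1) atTop atTop :=
    tendsto_atTop_add_const_right _ 1
      (tendsto_exp_atTop.comp (tendsto_id.const_mul_atTop two_pos))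
  have h := (tendsto_const_nhds (x := (1 : ℝ))).sub
    ((tendsto_const_nhds (x := (2 : ℝ))).div_atTop hden)
  rw [sub_zero] at h
  exact h.congr fun x => (tanh_eq_one_sub_two_div x).symm

theorem tendsto_tanh_atBot : Tendsto tanh atBot (𝓝 (-1)) := by
  simpa [Function.comp_def] using (tendsto_tanh_atTop.comp tendsto_neg_atBot_atTop).neg

end Real

theorem integrable_of_hasDerivAt_of_nonneg {F g : ℝ → ℝ} {m n : ℝ}
    (hF : ∀ x, HasDerivAt F (g x) x) (hg : ∀ x, 0 ≤ g x)
    (hbot : Tendsto F atBot (𝓝 m)) (htop : Tendsto F atTop (𝓝 n)) : Integrable g := by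
  have hint : ∀ a b, IntervalIntegrable g volume a b := fun a b =>
    intervalIntegral.intervalIntegrable_deriv_of_nonneg
      (fun x _ => (hF x).continuousAt.continuousWithinAt) (fun x _ => hF x) (fun x _ => hg x)
  refine integrable_of_intervalIntegral_norm_tendsto (n - m) (fun i => (hint (-i) i).1)
    tendsto_neg_atTop_atBot tendsto_id ?_
  have hFTC : ∀ i : ℝ, F i - F (-i) = ∫ x in -i..i, ‖g x‖ := fun i => by
    simp_rw [Real.norm_of_nonneg (hg _)]
    exact (intervalIntegral.integral_eq_sub_of_hasDerivAt (fun x _ => hF x) (hint _ _)).symm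
  exact (htop.sub (hbot.comp tendsto_neg_atTop_atBot)).congr hFTC

theorem integrable_one_div_cosh_sq : Integrable fun x => 1 / cosh x ^ 2 :=
  integrable_of_hasDerivAt_of_nonneg hasDerivAt_tanh (fun _ => by positivity)
    tendsto_tanh_atBot tendsto_tanh_atTop

theorem integral_one_div_cosh_sq : ∫ x, 1 / cosh x ^ 2 = 2 := by
  rw [integral_of_hasDerivAt_of_tendsto hasDerivAt_tanh integrable_one_div_cosh_sq
    tendsto_tanh_atBot tendsto_tanh_atTop]
  norm_num

theorem hasDerivAt_tanh_pow_three_div_three (x : ℝ) :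
    HasDerivAt (fun y => tanh y ^ 3 / 3) (tanh x ^ 2 / cosh x ^ 2) x := by
  refine (((hasDerivAt_tanh x).pow 3).div_const 3).congr_deriv ?_
  field_simp
  norm_num

theorem integrable_tanh_sq_div_cosh_sq : Integrable fun x => tanh x ^ 2 / cosh x ^ 2 :=
  integrable_of_hasDerivAt_of_nonneg hasDerivAt_tanh_pow_three_div_three
    (fun _ => by positivity) ((tendsto_tanh_atBot.pow 3).div_const 3)
    ((tendsto_tanh_atTop.pow 3).div_const 3)

theorem integral_tanh_sq_div_cosh_sq : ∫ x, tanh x ^ 2 / cosh x ^ 2 = 2 / 3 := by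
  rw [integral_of_hasDerivAt_of_tendsto hasDerivAt_tanh_pow_three_div_three
    integrable_tanh_sq_div_cosh_sq ((tendsto_tanh_atBot.pow 3).div_const 3)
    ((tendsto_tanh_atTop.pow 3).div_const 3)]
  norm_num

theorem integral_one_div_cosh_pow_four : ∫ x, 1 / cosh x ^ 4 = 4 / 3 := by
  have hsplit : (fun x => 1 / cosh x ^ 4) = fun x => 1 / cosh x ^ 2 - tanh x ^ 2 / cosh x ^ 2 := by
    funext x
    have := (cosh_pos x).ne'
    rw [tanh_eq_sinh_div_cosh, div_pow, sinh_sq]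
    field_simp
    ring
  rw [hsplit, integral_sub integrable_one_div_cosh_sq integrable_tanh_sq_div_cosh_sq,
    integral_one_div_cosh_sq, integral_tanh_sq_div_cosh_sq]
  norm_num

theorem integral_comp_mul_left_of_pos (g : ℝ → ℝ) {s : ℝ} (hs : 0 < s) :
    ∫ x, g (s * x) = (∫ x, g x) / s := by
  rw [Measure.integral_comp_mul_left, abs_of_pos (inv_pos.mpr hs), smul_eq_mul, inv_mul_eq_div]

theorem hasDerivAt_phiW (ω x : ℝ) :
    HasDerivAt (phiW ω) (-(√(2 * ω) * √ω) * (tanh (√ω * x) / cosh (√ω * x))) x := by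
  have hcosh : HasDerivAt (fun y => cosh (√ω * y)) (sinh (√ω * x) * √ω) x :=
    (hasDerivAt_cosh _).comp x ((hasDerivAt_id x).const_mul √ω |>.congr_deriv (mul_one _))
  have hphi : phiW ω = fun y => √(2 * ω) * (cosh (√ω * y))⁻¹ := by
    funext y
    rw [phiW, one_div]
  rw [hphi]
  refine ((hcosh.inv (cosh_pos _).ne').const_mul √(2 * ω)).congr_deriv ?_
  have := (cosh_pos (√ω * x)).ne'
  rw [tanh_eq_sinh_div_cosh]
  field_simp

theorem phiW_sq {ω : ℝ} (hω : 0 ≤ ω) (x : ℝ) :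
    phiW ω x ^ 2 = 2 * ω * (1 / cosh (√ω * x) ^ 2) := by
  rw [phiW, mul_pow, sq_sqrt (by positivity), div_pow, one_pow]

theorem phiW_pow_four {ω : ℝ} (hω : 0 ≤ ω) (x : ℝ) :
    phiW ω x ^ 4 = 4 * ω ^ 2 * (1 / cosh (√ω * x) ^ 4) := by
  rw [show phiW ω x ^ 4 = (phiW ω x ^ 2) ^ 2 by ring, phiW_sq hω]
  ring

theorem deriv_phiW_sq {ω : ℝ} (hω : 0 ≤ ω) (x : ℝ) :
    deriv (phiW ω) x ^ 2 = 2 * ω ^ 2 * (tanh (√ω * x) ^ 2 / cosh (√ω * x) ^ 2) := by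
  rw [(hasDerivAt_phiW ω x).deriv, mul_pow, neg_sq, mul_pow, sq_sqrt (by positivity),
    sq_sqrt hω, div_pow]
  ring

theorem integral_phiW_sq {ω : ℝ} (hω : 0 < ω) : ∫ x, phiW ω x ^ 2 = 4 * ω / √ω := by
  simp_rw [phiW_sq hω.le]
  rw [integral_const_mul, integral_comp_mul_left_of_pos (fun y => 1 / cosh y ^ 2) (sqrt_pos.2 hω),
    integral_one_div_cosh_sq]
  ring

theorem integral_deriv_phiW_sq {ω : ℝ} (hω : 0 < ω) :
    ∫ x, deriv (phiW ω) x ^ 2 = 4 * ω ^ 2 / (3 * √ω) := by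
  simp_rw [deriv_phiW_sq hω.le]
  rw [integral_const_mul, integral_comp_mul_left_of_pos (fun y => tanh y ^ 2 / cosh y ^ 2)
    (sqrt_pos.2 hω), integral_tanh_sq_div_cosh_sq]
  ring

theorem integral_phiW_pow_four {ω : ℝ} (hω : 0 < ω) :
    ∫ x, phiW ω x ^ 4 = 16 * ω ^ 2 / (3 * √ω) := by
  simp_rw [phiW_pow_four hω.le]
  rw [integral_const_mul, integral_comp_mul_left_of_pos (fun y => 1 / cosh y ^ 4) (sqrt_pos.2 hω),
    integral_one_div_cosh_pow_four]
  ring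

theorem integral_deriv_phiW_sq_add_mul_integral_phiW_sq {ω : ℝ} (hω : 0 < ω) :
    (∫ x, deriv (phiW ω) x ^ 2) + ω * ∫ x, phiW ω x ^ 2 = ∫ x, phiW ω x ^ 4 := by
  rw [integral_deriv_phiW_sq hω, integral_phiW_sq hω, integral_phiW_pow_four hω]
  have := (sqrt_pos.2 hω).ne'
  field_simp
  ring

noncomputable def scaledPair (a b : ℝ) (f : ℝ → ℝ) : Pair :=
  (fun x => ((a * f x : ℝ) : ℂ), fun x => ((b * f x : ℝ) : ℂ))

theorem Sfun_scaledPair (κ₁ κ₂ γ ω a b : ℝ) {f : ℝ → ℝ} (hf : Differentiable ℝ f) :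
    Sfun κ₁ κ₂ γ ω (scaledPair a b f) =
      (a ^ 2 + b ^ 2) / 2 * ((∫ x, deriv f x ^ 2) + ω * ∫ x, f x ^ 2)
        - (κ₁ * a ^ 4 + 2 * γ * a ^ 2 * b ^ 2 + κ₂ * b ^ 4) / 4 * ∫ x, f x ^ 4 := by
  have hderiv (c : ℝ) :
      deriv (fun x => ((c * f x : ℝ) : ℂ)) = fun x => ((c * deriv f x : ℝ) : ℂ) :=
    funext fun x => ((hf x).hasDerivAt.const_mul c).ofReal_comp.deriv
  have hcross (x : ℝ) : ((a * f x : ℝ) : ℂ) ^ 2 * (starRingEnd ℂ ((b * f x : ℝ) : ℂ)) ^ 2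
      = ((a ^ 2 * b ^ 2 * f x ^ 4 : ℝ) : ℂ) := by
    rw [Complex.conj_ofReal]
    push_cast
    ring
  have hnorm (r : ℝ) (n : ℕ) (hn : Even n) : ‖(r : ℂ)‖ ^ n = r ^ n := by
    rw [Complex.norm_real, Real.norm_eq_abs, hn.pow_abs]
  simp only [Sfun, En, Qm, scaledPair, hderiv, hcross, integral_complex_ofReal, Complex.ofReal_re,
    hnorm _ 2 even_two, hnorm _ 4 (by decide), mul_pow, integral_const_mul]
  ring

theorem phivec_add_smul_psivec (κ₁ ω t : ℝ) :
    phivec κ₁ ω + t • psivec κ₁ ω = scaledPair (√κ₁)⁻¹ (t * (√κ₁)⁻¹) (phiW ω) := by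
  ext x <;> simp [phivec, psivec, scaledPair, div_eq_inv_mul, mul_assoc]

theorem Sfun_phivec_add_smul_psivec {κ₁ ω : ℝ} (κ₂ : ℝ) (hκ₁ : 0 < κ₁) (hω : 0 < ω) (t : ℝ) :
    Sfun κ₁ κ₂ κ₁ ω (phivec κ₁ ω + t • psivec κ₁ ω)
      = (κ₁ - κ₂ * t ^ 4) / (4 * κ₁ ^ 2) * ∫ x, phiW ω x ^ 4 := by
  have hdiff : Differentiable ℝ (phiW ω) := fun x => (hasDerivAt_phiW ω x).differentiableAt
  have ha2 : ((√κ₁)⁻¹) ^ 2 = κ₁⁻¹ := by rw [inv_pow, sq_sqrt hκ₁.le]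
  have ha4 : ((√κ₁)⁻¹) ^ 4 = κ₁⁻¹ ^ 2 := by rw [← ha2, ← pow_mul]
  rw [phivec_add_smul_psivec, Sfun_scaledPair _ _ _ _ _ _ hdiff,
    integral_deriv_phiW_sq_add_mul_integral_phiW_sq hω, mul_pow, mul_pow, ha2, ha4]
  field_simp
  ring

theorem action_along_psivec_general (κ₁ κ₂ ω : ℝ)
    (hκ₁ : 0 < κ₁) (hω : 0 < ω)
    (ν₁ : ℝ) (hν₁ : ν₁ = -(6 * κ₂ / κ₁ ^ 2) * ∫ x : ℝ, (phiW ω x) ^ 4) :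
    ∀ lam : ℝ,
      Sfun κ₁ κ₂ κ₁ ω (phivec κ₁ ω + lam • psivec κ₁ ω)
        = Sfun κ₁ κ₂ κ₁ ω (phivec κ₁ ω) + (ν₁ / 24) * lam ^ 4 ∧
      deriv (fun t : ℝ => Sfun κ₁ κ₂ κ₁ ω (phivec κ₁ ω + t • psivec κ₁ ω)) lam
        = (ν₁ / 6) * lam ^ 3 := by
  have hline : ∀ t : ℝ, Sfun κ₁ κ₂ κ₁ ω (phivec κ₁ ω + t • psivec κ₁ ω)
      = Sfun κ₁ κ₂ κ₁ ω (phivec κ₁ ω) + ν₁ / 24 * t ^ 4 := fun t => by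
    have h0 := Sfun_phivec_add_smul_psivec κ₂ hκ₁ hω 0
    rw [zero_smul, add_zero] at h0
    rw [Sfun_phivec_add_smul_psivec κ₂ hκ₁ hω t, h0, hν₁]
    field_simp
    ring
  intro lam
  refine ⟨hline lam, ?_⟩
  rw [funext hline, ((hasDerivAt_pow 4 lam).const_mul (ν₁ / 24)).const_add _ |>.deriv]
  ring

/-- degenerate case `γ = κ₁`: for all `λ ∈ ℝ`, exactly
`S_ω(⃗φ_ω + λ⃗ψ_ω) = S_ω(⃗φ_ω) + (ν₁/24)λ⁴` and
`⟨S_ω'(⃗φ_ω + λ⃗ψ_ω), ⃗ψ_ω⟩ = (ν₁/6)λ³`, where `ν₁ = -(6κ₂/κ₁²)‖φ_ω‖⁴_{L⁴}`. -/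
theorem action_along_psivec (κ₁ κ₂ ω : ℝ)
    (hκ₁ : 0 < κ₁) (hκ₂ : 0 < κ₂) (hω : 0 < ω)
    (ν₁ : ℝ) (hν₁ : ν₁ = -(6 * κ₂ / κ₁ ^ 2) * ∫ x : ℝ, (phiW ω x) ^ 4) :
    ∀ lam : ℝ,
      Sfun κ₁ κ₂ κ₁ ω (phivec κ₁ ω + lam • psivec κ₁ ω)
        = Sfun κ₁ κ₂ κ₁ ω (phivec κ₁ ω) + (ν₁ / 24) * lam ^ 4 ∧
      deriv (fun t : ℝ => Sfun κ₁ κ₂ κ₁ ω (phivec κ₁ ω + t • psivec κ₁ ω)) lam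
        = (ν₁ / 6) * lam ^ 3 :=
  action_along_psivec_general κ₁ κ₂ ω hκ₁ hω ν₁ hν₁
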